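/- arXiv:1710.07119 — 4 statements merged into one kernel-verified Lean document; each statement's English description precedes it below -/
import Mathlib

section
/- Let Y = ∏_{i=1}^d [l_i, u_i] ⊂ ℝ^d be a nonempty box and let F : ℝ^d → ℝ be differentiable with a coordinate-wise quadratic upper bound with constant L > 0 on Y. Fix ξ ∈ Y and for each i let ξ^{+,i} := ξ + α_i e_i be the coordinate prox-step of F at ξ in coordinate i with step constant L. Then the average over a uniformly random coordinate satisfies (1/d) Σ_{i=1}^d F(ξ^{+,i}) ≤ F(ξ) − (1/(2 d L)) · D(ξ, L), where D(ξ, L) := −2L · inf_{ξ' ∈ Y} [ ⟨∇F(ξ), ξ' − ξ⟩ + (L/2) ‖ξ' − ξ‖² ]. -/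
/-- Membership in the box `Y = ∏_i [l_i, u_i] ⊂ ℝ^d`. -/
def InBox {d : ℕ} (l u ξ : Fin d → ℝ) : Prop := ∀ i, ξ i ∈ Set.Icc (l i) (u i)

/-- The `i`-th partial derivative `∂_i F` of `F : ℝ^d → ℝ` at `ξ`. -/
noncomputable def pd {d : ℕ} (F : (Fin d → ℝ) → ℝ) (ξ : Fin d → ℝ) (i : Fin d) : ℝ :=
  deriv (fun t : ℝ => F (Function.update ξ i t)) (ξ i)

/-- `F` has a coordinate-wise quadratic upper bound with constant `L` on the box:
`F(ξ + α e_i) ≤ F(ξ) + α ∂_i F(ξ) + (L/2) α²` whenever `ξ` and `ξ + α e_i` lie in the box. -/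
def CoordQuadUB {d : ℕ} (F : (Fin d → ℝ) → ℝ) (L : ℝ) (l u : Fin d → ℝ) : Prop :=
  ∀ ξ, InBox l u ξ → ∀ i : Fin d, ∀ α : ℝ, InBox l u (Function.update ξ i (ξ i + α)) →
    F (Function.update ξ i (ξ i + α)) ≤ F ξ + α * pd F ξ i + L / 2 * α ^ 2

/-- `ξ'` is the coordinate prox-step of `F` at `ξ` in coordinate `i` with step constant `L`:
`ξ' = ξ + α e_i` where `α` minimizes `α ∂_i F(ξ) + (L/2) α²` subject to `ξ_i + α ∈ [l_i, u_i]`. -/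
def IsProxStep {d : ℕ} (F : (Fin d → ℝ) → ℝ) (L : ℝ) (l u ξ : Fin d → ℝ) (i : Fin d)
    (ξ' : Fin d → ℝ) : Prop :=
  ∃ α : ℝ, ξ' = Function.update ξ i (ξ i + α) ∧ ξ i + α ∈ Set.Icc (l i) (u i) ∧
    ∀ β : ℝ, ξ i + β ∈ Set.Icc (l i) (u i) →
      α * pd F ξ i + L / 2 * α ^ 2 ≤ β * pd F ξ i + L / 2 * β ^ 2

/-- The forward-step quantity
`D(ξ, α) = −2α · inf_{ξ' ∈ Y} [⟨∇F(ξ), ξ' − ξ⟩ + (α/2)‖ξ' − ξ‖²]`. -/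
noncomputable def Dfwd {d : ℕ} (F : (Fin d → ℝ) → ℝ) (l u ξ : Fin d → ℝ) (α : ℝ) : ℝ :=
  -2 * α * sInf {v : ℝ | ∃ ξ', InBox l u ξ' ∧
    v = (∑ i, pd F ξ i * (ξ' i - ξ i)) + α / 2 * ∑ i, (ξ' i - ξ i) ^ 2}

/-- The proximal Polyak–Łojasiewicz inequality on the box with constant `σ` and optimal
value `Fstar`: `(1/2) D(ξ, L) ≥ σ (F(ξ) − F*)` for all `ξ` in the box. -/
def ProxPL {d : ℕ} (F : (Fin d → ℝ) → ℝ) (L : ℝ) (l u : Fin d → ℝ) (σ Fstar : ℝ) : Prop :=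
  ∀ ξ, InBox l u ξ → (1 / 2) * Dfwd F l u ξ L ≥ σ * (F ξ - Fstar)

/-- for `F` differentiable with a coordinate-wise quadratic upper bound with
constant `L > 0` on a nonempty box, the average of `F` over the `d` coordinate prox-steps
satisfies `(1/d) Σ_i F(ξ^{+,i}) ≤ F(ξ) − (1/(2dL)) D(ξ, L)`. -/
theorem stmt4 {d : ℕ} (hd : 0 < d) (l u : Fin d → ℝ) (hlu : ∀ i, l i ≤ u i)
    (F : (Fin d → ℝ) → ℝ) (hF : Differentiable ℝ F) (L : ℝ) (hL : 0 < L)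
    (hquad : CoordQuadUB F L l u)
    (ξ : Fin d → ℝ) (hξ : InBox l u ξ)
    (ξplus : Fin d → (Fin d → ℝ))
    (hplus : ∀ i, IsProxStep F L l u ξ i (ξplus i)) :
    (1 / (d : ℝ)) * ∑ i, F (ξplus i) ≤ F ξ - (1 / (2 * d * L)) * Dfwd F l u ξ L := by

  classical
  choose α hα hfeas hmin using hplus
  set g : Fin d → ℝ := pd F ξ with hg
  set m : Fin d → ℝ := fun i => α i * g i + L / 2 * (α i) ^ 2 with hm
  have hstep : ∀ i, F (ξplus i) ≤ F ξ + m i := by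
    intro i
    have hbox : InBox l u (Function.update ξ i (ξ i + α i)) := by
      intro j
      by_cases h : j = i
      · subst h; simpa using hfeas j
      · simpa [Function.update_of_ne h] using hξ j
    have h := hquad ξ hξ i (α i) hbox
    rw [hα i]
    simpa [hm, hg, add_assoc] using h
  set S : Set ℝ := {v : ℝ | ∃ ξ', InBox l u ξ' ∧
    v = (∑ i, pd F ξ i * (ξ' i - ξ i)) + L / 2 * ∑ i, (ξ' i - ξ i) ^ 2} with hS
  have hlb : ∀ v ∈ S, (∑ i, m i) ≤ v := by
    rintro v ⟨ξ', hξ', rfl⟩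
    have : (∑ i, pd F ξ i * (ξ' i - ξ i)) + L / 2 * ∑ i, (ξ' i - ξ i) ^ 2
        = ∑ i, ((ξ' i - ξ i) * g i + L / 2 * (ξ' i - ξ i) ^ 2) := by
      rw [Finset.mul_sum, ← Finset.sum_add_distrib]
      refine Finset.sum_congr rfl fun i _ => by rw [hg]; ring
    rw [this]
    refine Finset.sum_le_sum fun i _ => ?_
    have hfeas' : ξ i + (ξ' i - ξ i) ∈ Set.Icc (l i) (u i) := by
      simpa using hξ' i
    simpa [hm, hg] using hmin i (ξ' i - ξ i) hfeas'
  have hmem : (∑ i, m i) ∈ S := by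
    refine ⟨fun j => ξ j + α j, fun j => by simpa using hfeas j, ?_⟩
    rw [Finset.mul_sum, ← Finset.sum_add_distrib]
    refine Finset.sum_congr rfl fun i _ => by simp [hm, hg]; ring
  have hSinf : sInf S = ∑ i, m i :=
    le_antisymm (csInf_le ⟨∑ i, m i, hlb⟩ hmem) (le_csInf ⟨_, hmem⟩ hlb)
  have hD : Dfwd F l u ξ L = -2 * L * ∑ i, m i := by
    rw [Dfwd, ← hS, hSinf]
  rw [hD]
  have hdpos : (0:ℝ) < d := by exact_mod_cast hd
  have hsum : ∑ i, F (ξplus i) ≤ d * F ξ + ∑ i, m i := by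
    calc ∑ i, F (ξplus i) ≤ ∑ i, (F ξ + m i) := Finset.sum_le_sum fun i _ => hstep i
    _ = d * F ξ + ∑ i, m i := by
        rw [Finset.sum_add_distrib]; simp [Finset.card_fin]
  have hne : (d:ℝ) ≠ 0 := ne_of_gt hdpos
  have hLne : L ≠ 0 := ne_of_gt hL
  have : F ξ - 1 / (2 * d * L) * (-2 * L * ∑ i, m i) = (1/(d:ℝ)) * (d * F ξ + ∑ i, m i) := by
    field_simp
    ring
  rw [this]
  have h1d : (0:ℝ) ≤ 1 / d := by positivity
  calc (1/(d:ℝ)) * ∑ i, F (ξplus i) ≤ (1/(d:ℝ)) * (d * F ξ + ∑ i, m i) :=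
    mul_le_mul_of_nonneg_left hsum h1d
end

section
/- Let Y = ∏_{i=1}^d [l_i, u_i] ⊂ ℝ^d be a nonempty box and let F : ℝ^d → ℝ be differentiable with a coordinate-wise quadratic upper bound with constant L > 0 on Y. Suppose F attains its infimum F* on Y and satisfies the proximal Polyak–Łojasiewicz inequality on Y with constant σ > 0: (1/2) D(ξ, L) ≥ σ (F(ξ) − F*) for all ξ ∈ Y. Fix ξ ∈ Y and for each i let ξ^{+,i} be the coordinate prox-step of F at ξ in coordinate i with step constant L. Then (1/d) Σ_{i=1}^d F(ξ^{+,i}) − F* ≤ (1 − σ/(dL)) (F(ξ) − F*). -/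
/-- if moreover `F` attains its infimum `F*` on the box and satisfies the
proximal Polyak–Łojasiewicz inequality with constant `σ > 0`, then the expected progress
of one uniformly random coordinate prox-step is a contraction:
`(1/d) Σ_i F(ξ^{+,i}) − F* ≤ (1 − σ/(dL)) (F(ξ) − F*)`. -/
theorem stmt5 {d : ℕ} (hd : 0 < d) (l u : Fin d → ℝ) (hlu : ∀ i, l i ≤ u i)
    (F : (Fin d → ℝ) → ℝ) (hF : Differentiable ℝ F) (L σ Fstar : ℝ)
    (hL : 0 < L) (hσ : 0 < σ)
    (hquad : CoordQuadUB F L l u)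
    (hstar : Fstar = sInf {v : ℝ | ∃ ξ, InBox l u ξ ∧ v = F ξ})
    (hatt : ∃ ξs, InBox l u ξs ∧ F ξs = Fstar)
    (hPL : ProxPL F L l u σ Fstar)
    (ξ : Fin d → ℝ) (hξ : InBox l u ξ)
    (ξplus : Fin d → (Fin d → ℝ))
    (hplus : ∀ i, IsProxStep F L l u ξ i (ξplus i)) :
    (1 / (d : ℝ)) * ∑ i, F (ξplus i) - Fstar ≤ (1 - σ / (d * L)) * (F ξ - Fstar) := by

  classical
  choose α hup hmem hopt using hplus
  set g : Fin d → ℝ := fun i => pd F ξ i with hg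
  set m : Fin d → ℝ := fun i => α i * g i + L / 2 * (α i) ^ 2 with hm
  -- the infimum in Dfwd equals ∑ m
  have hboxplus : InBox l u (fun i => ξ i + α i) := fun i => hmem i
  have hleast : IsLeast {v : ℝ | ∃ ξ', InBox l u ξ' ∧
      v = (∑ i, pd F ξ i * (ξ' i - ξ i)) + L / 2 * ∑ i, (ξ' i - ξ i) ^ 2} (∑ i, m i) := by
    constructor
    · refine ⟨fun i => ξ i + α i, hboxplus, ?_⟩
      rw [Finset.mul_sum, ← Finset.sum_add_distrib]
      apply Finset.sum_congr rfl
      intro i _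
      simp [hm, hg]
      ring
    · rintro v ⟨ξ', hξ', rfl⟩
      rw [Finset.mul_sum, ← Finset.sum_add_distrib]
      apply Finset.sum_le_sum
      intro i _
      have := hopt i (ξ' i - ξ i) (by simpa using hξ' i)
      simp only [hm, hg]
      nlinarith [this]
  have hInf : sInf {v : ℝ | ∃ ξ', InBox l u ξ' ∧
      v = (∑ i, pd F ξ i * (ξ' i - ξ i)) + L / 2 * ∑ i, (ξ' i - ξ i) ^ 2} = ∑ i, m i :=
    hleast.csInf_eq
  have hD : Dfwd F l u ξ L = -2 * L * ∑ i, m i := by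
    rw [Dfwd, hInf]
  have hPLx := hPL ξ hξ
  rw [hD] at hPLx
  -- ∑ m ≤ -(σ/L) * (F ξ - Fstar)
  have hsum_m : L * ∑ i, m i ≤ -σ * (F ξ - Fstar) := by nlinarith [hPLx]
  -- per-coordinate descent
  have hdesc : ∀ i, F (ξplus i) ≤ F ξ + m i := by
    intro i
    have hb : InBox l u (Function.update ξ i (ξ i + α i)) := by
      intro j
      rcases eq_or_ne j i with rfl | hji
      · simpa using hmem j
      · simpa [Function.update_of_ne hji] using hξ j
    have h := hquad ξ hξ i (α i) hb
    rw [hup i]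
    simp only [hm, hg]
    linarith
  have hsumF : ∑ i, F (ξplus i) ≤ (d : ℝ) * F ξ + ∑ i, m i := by
    calc ∑ i, F (ξplus i) ≤ ∑ i : Fin d, (F ξ + m i) := Finset.sum_le_sum fun i _ => hdesc i
    _ = (d : ℝ) * F ξ + ∑ i, m i := by
        rw [Finset.sum_add_distrib, Finset.sum_const, Finset.card_univ, Fintype.card_fin,
          nsmul_eq_mul]
  have hdpos : (0 : ℝ) < d := Nat.cast_pos.mpr hd
  have hsm : ∑ i, m i ≤ -σ / L * (F ξ - Fstar) := by
    rw [div_mul_eq_mul_div, le_div_iff₀ hL]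
    nlinarith [hsum_m]
  have h1 : (1 / (d : ℝ)) * ∑ i, F (ξplus i) ≤ F ξ + (1 / (d : ℝ)) * ∑ i, m i := by
    have := mul_le_mul_of_nonneg_left hsumF (le_of_lt (one_div_pos.mpr hdpos))
    calc (1 / (d : ℝ)) * ∑ i, F (ξplus i) ≤ (1 / (d : ℝ)) * ((d : ℝ) * F ξ + ∑ i, m i) := this
    _ = F ξ + (1 / (d : ℝ)) * ∑ i, m i := by field_simp
  have h2 : (1 / (d : ℝ)) * ∑ i, m i ≤ -(σ / ((d : ℝ) * L)) * (F ξ - Fstar) := by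
    have := mul_le_mul_of_nonneg_left hsm (le_of_lt (one_div_pos.mpr hdpos))
    calc (1 / (d : ℝ)) * ∑ i, m i ≤ (1 / (d : ℝ)) * (-σ / L * (F ξ - Fstar)) := this
    _ = -(σ / ((d : ℝ) * L)) * (F ξ - Fstar) := by field_simp
  have : (1 - σ / ((d:ℝ) * L)) * (F ξ - Fstar)
      = F ξ + -(σ / ((d : ℝ) * L)) * (F ξ - Fstar) - Fstar := by ring
  rw [this]
  linarith [h1, h2]
end

section
/- (Theorem 1 of the paper, linear convergence of randomized coordinate descent.) Let Y = ∏_{i=1}^d [l_i, u_i] ⊂ ℝ^d be a nonempty box and let F : ℝ^d → ℝ be differentiable with a coordinate-wise quadratic upper bound with constant L > 0 on Y, attaining its infimum F* on Y, and satisfying the proximal Polyak–Łojasiewicz inequality on Y with constant σ > 0. Fix ξ^0 ∈ Y and, for every finite coordinate sequence ω = (i^0, …, i^{k−1}) ∈ {1,…,d}^k, define iterates by ξ^{j+1}(ω) := (ξ^j(ω))^{+,i^j}, the coordinate prox-step of F in coordinate i^j with step constant L. Then the expectation over coordinates chosen independently and uniformly at random satisfies d^{−k} Σ_{ω ∈ {1,…,d}^k}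 [ F(ξ^k(ω)) − F* ] ≤ (1 − σ/(dL))^k (F(ξ^0) − F*) for every k ≥ 0. -/
lemma box_update {d : ℕ} {l u ξ : Fin d → ℝ} (hξ : InBox l u ξ) (i : Fin d) {t : ℝ}
    (ht : t ∈ Set.Icc (l i) (u i)) : InBox l u (Function.update ξ i t) := by
  intro j
  rcases eq_or_ne j i with rfl | hj
  · simpa using ht
  · simpa [Function.update_apply, hj] using hξ j

lemma key_bdd {d : ℕ} (l u : Fin d → ℝ) (F : (Fin d → ℝ) → ℝ) (hF : Continuous F) :
    BddBelow {v : ℝ | ∃ ξ, InBox l u ξ ∧ v = F ξ} := by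
  have h : {v : ℝ | ∃ ξ, InBox l u ξ ∧ v = F ξ}
      = F '' (Set.pi Set.univ fun i => Set.Icc (l i) (u i)) := by
    ext v
    constructor
    · rintro ⟨ξ, hξ, rfl⟩; exact ⟨ξ, fun i _ => hξ i, rfl⟩
    · rintro ⟨ξ, hξ, rfl⟩; exact ⟨ξ, fun i => hξ i (Set.mem_univ i), rfl⟩
  rw [h]
  exact ((isCompact_univ_pi fun i => isCompact_Icc).image hF).bddBelow

lemma seq_bound (e : ℕ → ℝ) (c E0 : ℝ) (h0 : e 0 = E0) (hnn : ∀ k, 0 ≤ e k)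
    (hstep : ∀ k, e (k + 1) ≤ c * e k) : ∀ k, e k ≤ c ^ k * E0 := by
  rcases le_or_gt 0 c with hc | hc
  · intro k
    induction k with
    | zero => simp [h0]
    | succ n ih =>
      calc e (n + 1) ≤ c * e n := hstep n
        _ ≤ c * (c ^ n * E0) := mul_le_mul_of_nonneg_left ih hc
        _ = c ^ (n + 1) * E0 := by ring
  · have h00 : e 0 = 0 := by
      have h1 : 0 ≤ c * e 0 := le_trans (hnn 1) (hstep 0)
      have h2 : c * e 0 ≤ 0 := mul_nonpos_of_nonpos_of_nonneg hc.le (hnn 0)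
      rcases mul_eq_zero.mp (le_antisymm h2 h1) with h | h
      · exact absurd h (ne_of_lt hc)
      · exact h
    have hz : ∀ k, e k = 0 := by
      intro k
      induction k with
      | zero => exact h00
      | succ n ih =>
        have := hstep n
        rw [ih, mul_zero] at this
        exact le_antisymm this (hnn (n + 1))
    intro k
    rw [hz k, ← h0, h00, mul_zero]

lemma one_step {d : ℕ} (l u : Fin d → ℝ)
    (F : (Fin d → ℝ) → ℝ) (L σ Fstar : ℝ) (hL : 0 < L)
    (hquad : CoordQuadUB F L l u) (hPL : ProxPL F L l u σ Fstar)
    (ξ : Fin d → ℝ) (hξ : InBox l u ξ) (η : Fin d → (Fin d → ℝ))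
    (hη : ∀ i, IsProxStep F L l u ξ i (η i)) :
    ∑ i, F (η i) ≤ d * F ξ - σ / L * (F ξ - Fstar) := by
  choose α hαeq hαmem hαmin using hη
  set m : Fin d → ℝ := fun i => α i * pd F ξ i + L / 2 * (α i) ^ 2 with hm
  have hSinf : sInf {v : ℝ | ∃ ξ', InBox l u ξ' ∧
      v = (∑ i, pd F ξ i * (ξ' i - ξ i)) + L / 2 * ∑ i, (ξ' i - ξ i) ^ 2} = ∑ i, m i := by
    have hmem : (∑ i, m i) ∈ {v : ℝ | ∃ ξ', InBox l u ξ' ∧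
        v = (∑ i, pd F ξ i * (ξ' i - ξ i)) + L / 2 * ∑ i, (ξ' i - ξ i) ^ 2} := by
      refine ⟨fun i => ξ i + α i, fun i => hαmem i, ?_⟩
      simp only [add_sub_cancel_left]
      rw [Finset.mul_sum, ← Finset.sum_add_distrib]
      exact Finset.sum_congr rfl fun i _ => by simp [hm]; ring
    have hlb : ∀ v ∈ {v : ℝ | ∃ ξ', InBox l u ξ' ∧
        v = (∑ i, pd F ξ i * (ξ' i - ξ i)) + L / 2 * ∑ i, (ξ' i - ξ i) ^ 2}, ∑ i, m i ≤ v := by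
      rintro v ⟨ξ', hξ', rfl⟩
      have hrw : (∑ i, pd F ξ i * (ξ' i - ξ i)) + L / 2 * ∑ i, (ξ' i - ξ i) ^ 2
          = ∑ i, ((ξ' i - ξ i) * pd F ξ i + L / 2 * (ξ' i - ξ i) ^ 2) := by
        rw [Finset.mul_sum, ← Finset.sum_add_distrib]
        exact Finset.sum_congr rfl fun i _ => by ring
      rw [hrw]
      refine Finset.sum_le_sum fun i _ => ?_
      exact hαmin i (ξ' i - ξ i) (by simpa using hξ' i)
    exact le_antisymm (csInf_le ⟨∑ i, m i, fun v hv => hlb v hv⟩ hmem) (le_csInf ⟨_, hmem⟩ hlb)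
  have hPLξ := hPL ξ hξ
  rw [Dfwd, hSinf] at hPLξ
  have hsum_m : ∑ i, m i ≤ -(σ * (F ξ - Fstar)) / L := by
    rw [le_div_iff₀ hL]
    nlinarith [hPLξ]
  have hFi : ∀ i, F (η i) ≤ F ξ + m i := by
    intro i
    rw [hαeq i]
    have := hquad ξ hξ i (α i) (box_update hξ i (hαmem i))
    simp only [hm]
    linarith [this]
  calc ∑ i, F (η i) ≤ ∑ i, (F ξ + m i) := Finset.sum_le_sum fun i _ => hFi i
    _ = d * F ξ + ∑ i, m i := by
        rw [Finset.sum_add_distrib, Finset.sum_const, Finset.card_univ, Fintype.card_fin,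
          nsmul_eq_mul]
    _ ≤ d * F ξ + -(σ * (F ξ - Fstar)) / L := by linarith
    _ = d * F ξ - σ / L * (F ξ - Fstar) := by field_simp; ring

/-- Theorem 1 of the paper: randomized coordinate descent with coordinates
chosen independently and uniformly at random converges linearly:
`d^{−k} Σ_{ω ∈ {1,…,d}^k} [F(ξ^k(ω)) − F*] ≤ (1 − σ/(dL))^k (F(ξ⁰) − F*)`. -/
theorem stmt6 {d : ℕ} (hd : 0 < d) (l u : Fin d → ℝ) (hlu : ∀ i, l i ≤ u i)
    (F : (Fin d → ℝ) → ℝ) (hF : Differentiable ℝ F) (L σ Fstar : ℝ)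
    (hL : 0 < L) (hσ : 0 < σ)
    (hquad : CoordQuadUB F L l u)
    (hstar : Fstar = sInf {v : ℝ | ∃ ξ, InBox l u ξ ∧ v = F ξ})
    (hatt : ∃ ξs, InBox l u ξs ∧ F ξs = Fstar)
    (hPL : ProxPL F L l u σ Fstar)
    (ξ0 : Fin d → ℝ) (hξ0 : InBox l u ξ0)
    (Ξ : (k : ℕ) → (Fin k → Fin d) → (Fin d → ℝ))
    (hinit : ∀ ω : Fin 0 → Fin d, Ξ 0 ω = ξ0)
    (hstep : ∀ k : ℕ, ∀ ω : Fin (k + 1) → Fin d,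
      IsProxStep F L l u (Ξ k (fun j => ω j.castSucc)) (ω (Fin.last k)) (Ξ (k + 1) ω)) :
    ∀ k : ℕ,
      (1 / (d : ℝ) ^ k) * ∑ ω : Fin k → Fin d, (F (Ξ k ω) - Fstar) ≤
        (1 - σ / (d * L)) ^ k * (F ξ0 - Fstar) := by
  have hdpos : (0 : ℝ) < d := by exact_mod_cast hd
  have hFge : ∀ ξ, InBox l u ξ → Fstar ≤ F ξ := by
    intro ξ hξ
    rw [hstar]
    exact csInf_le (key_bdd l u F hF.continuous) ⟨ξ, hξ, rfl⟩
  have hbox : ∀ k (ω : Fin k → Fin d), InBox l u (Ξ k ω) := by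
    intro k
    induction k with
    | zero => intro ω; rw [hinit]; exact hξ0
    | succ n ih =>
      intro ω
      obtain ⟨α, heq, hmem, -⟩ := hstep n ω
      rw [heq]
      exact box_update (ih _) _ hmem
  set e : ℕ → ℝ :=
    fun k => (1 / (d : ℝ) ^ k) * ∑ ω : Fin k → Fin d, (F (Ξ k ω) - Fstar) with he
  have he0 : e 0 = F ξ0 - Fstar := by
    have hconst : ∀ ω : Fin 0 → Fin d, F (Ξ 0 ω) - Fstar = F ξ0 - Fstar := fun ω => by
      rw [hinit]
    simp only [he, pow_zero]
    rw [Finset.sum_congr rfl fun ω _ => hconst ω, Finset.sum_const, Finset.card_univ]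
    simp
  have henn : ∀ k, 0 ≤ e k := by
    intro k
    apply mul_nonneg (by positivity)
    exact Finset.sum_nonneg fun ω _ => by linarith [hFge _ (hbox k ω)]
  have hestep : ∀ k, e (k + 1) ≤ (1 - σ / (d * L)) * e k := by
    intro k
    have hinner : ∀ ω' : Fin k → Fin d,
        ∑ i : Fin d, (F (Ξ (k + 1) (Fin.snoc ω' i)) - Fstar)
          ≤ d * (1 - σ / (d * L)) * (F (Ξ k ω') - Fstar) := by
      intro ω'
      have h1 : ∀ i : Fin d, IsProxStep F L l u (Ξ k ω') i (Ξ (k + 1) (Fin.snoc ω' i)) := by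
        intro i
        have h := hstep k (Fin.snoc ω' i)
        have hrest : (fun j : Fin k => (Fin.snoc ω' i : Fin (k + 1) → Fin d) j.castSucc) = ω' := by
          funext j; simp
        rw [hrest] at h
        simpa using h
      have h2 := one_step l u F L σ Fstar hL hquad hPL _ (hbox k ω') _ h1
      have hsum' : ∑ i : Fin d, (F (Ξ (k + 1) (Fin.snoc ω' i)) - Fstar)
          = (∑ i : Fin d, F (Ξ (k + 1) (Fin.snoc ω' i))) - d * Fstar := by
        rw [Finset.sum_sub_distrib, Finset.sum_const, Finset.card_univ, Fintype.card_fin,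
          nsmul_eq_mul]
      have hdc : (d : ℝ) * (1 - σ / (d * L)) * (F (Ξ k ω') - Fstar)
          = d * F (Ξ k ω') - σ / L * (F (Ξ k ω') - Fstar) - d * Fstar := by
        field_simp
        ring
      rw [hsum', hdc]
      linarith [h2]
    have hsum : ∑ ω : Fin (k + 1) → Fin d, (F (Ξ (k + 1) ω) - Fstar)
        ≤ ∑ ω' : Fin k → Fin d, d * (1 - σ / (d * L)) * (F (Ξ k ω') - Fstar) := by
      rw [← Equiv.sum_comp (Fin.snocEquiv fun _ => Fin d)
        (fun ω => F (Ξ (k + 1) ω) - Fstar), Fintype.sum_prod_type]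
      rw [Finset.sum_comm]
      exact Finset.sum_le_sum fun ω' _ => hinner ω'
    have hfac : (0 : ℝ) < 1 / (d : ℝ) ^ (k + 1) := by positivity
    calc e (k + 1) ≤ (1 / (d : ℝ) ^ (k + 1)) *
          ∑ ω' : Fin k → Fin d, d * (1 - σ / (d * L)) * (F (Ξ k ω') - Fstar) := by
          simp only [he]
          exact mul_le_mul_of_nonneg_left hsum hfac.le
      _ = (1 - σ / (d * L)) * e k := by
          simp only [he, ← Finset.mul_sum]
          field_simp
          ring
  have main := seq_bound e (1 - σ / (d * L)) (F ξ0 - Fstar) he0 henn hestep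
  intro k
  exact main k
end

section
/- (One-step recursion for time-varying tracking.) Let Y = ∏_{i=1}^d [l_i, u_i] ⊂ ℝ^d be a nonempty box, and let F, G : ℝ^d → ℝ be differentiable functions on Y (G the current objective, F the previous one) such that: F has a coordinate-wise quadratic upper bound with constant L > 0 on Y and satisfies the proximal Polyak–Łojasiewicz inequality on Y with constant σ > 0 and attained optimal value F*; G attains the same optimal value G* = F* on Y; and sup_{ξ ∈ Y} |G(ξ) − F(ξ)| ≤ e for some e ≥ 0. Then for every ξ ∈ Y, with ξ^{+,i} the coordinate prox-step of F at ξ in coordinate i with step constant L, (1/d) Σ_{i=1}^d G(ξ^{+,i}) − G* ≤ (1 − σ/(dL)) (F(ξ) − F*) + e. -/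
section ProxStep

variable {d : ℕ} {F : (Fin d → ℝ) → ℝ} {L : ℝ} {l u ξ ξ' : Fin d → ℝ} {i : Fin d}

theorem InBox.update (hξ : InBox l u ξ) {x : ℝ} (hx : x ∈ Set.Icc (l i) (u i)) :
    InBox l u (Function.update ξ i x) := by
  intro j
  rcases eq_or_ne j i with rfl | hji
  · simpa using hx
  · simpa [hji] using hξ j

theorem IsProxStep.inBox (h : IsProxStep F L l u ξ i ξ') (hξ : InBox l u ξ) : InBox l u ξ' := by
  obtain ⟨α, rfl, hα, -⟩ := h
  exact hξ.update hα

theorem IsProxStep.le_add_model (hquad : CoordQuadUB F L l u) (hξ : InBox l u ξ)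
    (h : IsProxStep F L l u ξ i ξ') {β : ℝ} (hβ : ξ i + β ∈ Set.Icc (l i) (u i)) :
    F ξ' ≤ F ξ + (β * pd F ξ i + L / 2 * β ^ 2) := by
  obtain ⟨α, rfl, hα, hmin⟩ := h
  linarith [hquad ξ hξ i α (hξ.update hα), hmin β hβ]

theorem sum_proxStep_le_sub_Dfwd (hL : 0 ≤ L) (hquad : CoordQuadUB F L l u) (hξ : InBox l u ξ)
    {ξplus : Fin d → Fin d → ℝ} (hplus : ∀ i, IsProxStep F L l u ξ i (ξplus i)) :
    L * ∑ i, F (ξplus i) ≤ L * (d * F ξ) - Dfwd F l u ξ L / 2 := by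
  have hinf : ∑ i, F (ξplus i) - d * F ξ ≤ sInf {v : ℝ | ∃ ξ', InBox l u ξ' ∧
      v = (∑ i, pd F ξ i * (ξ' i - ξ i)) + L / 2 * ∑ i, (ξ' i - ξ i) ^ 2} := by
    refine le_csInf ⟨_, ξ, hξ, rfl⟩ ?_
    rintro v ⟨ξ', hξ', rfl⟩
    calc ∑ i, F (ξplus i) - d * F ξ = ∑ i, (F (ξplus i) - F ξ) := by simp [Finset.sum_sub_distrib]
      _ ≤ ∑ i, ((ξ' i - ξ i) * pd F ξ i + L / 2 * (ξ' i - ξ i) ^ 2) :=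
          Finset.sum_le_sum fun i _ ↦ by
            linarith [(hplus i).le_add_model hquad hξ (β := ξ' i - ξ i) (by simpa using hξ' i)]
      _ = _ := by simp only [Finset.sum_add_distrib, Finset.mul_sum, mul_comm]
  unfold Dfwd
  nlinarith [mul_le_mul_of_nonneg_left hinf hL]

end ProxStep

theorem stmt7_general {d : ℕ} (hd : 0 < d) (l u : Fin d → ℝ) (F G : (Fin d → ℝ) → ℝ)
    (L σ Fstar Gstar e : ℝ) (hL : 0 < L) (hquad : CoordQuadUB F L l u)
    (hPL : ProxPL F L l u σ Fstar)
    (hsame : Gstar = Fstar)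
    (hclose : ∀ ξ, InBox l u ξ → |G ξ - F ξ| ≤ e)
    (ξ : Fin d → ℝ) (hξ : InBox l u ξ)
    (ξplus : Fin d → (Fin d → ℝ))
    (hplus : ∀ i, IsProxStep F L l u ξ i (ξplus i)) :
    (1 / (d : ℝ)) * ∑ i, G (ξplus i) - Gstar ≤ (1 - σ / (d * L)) * (F ξ - Fstar) + e := by
  have hdescent : ∑ i, F (ξplus i) ≤ d * F ξ - σ / L * (F ξ - Fstar) := by
    have h := sum_proxStep_le_sub_Dfwd hL.le hquad hξ hplus
    have h' : L * ∑ i, F (ξplus i) ≤ L * (d * F ξ - σ / L * (F ξ - Fstar)) := by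
      rw [mul_sub, ← mul_assoc L (σ / L), mul_div_cancel₀ σ hL.ne']
      linarith [hPL ξ hξ]
    exact le_of_mul_le_mul_left h' hL
  have hperturb : ∑ i, G (ξplus i) ≤ ∑ i, F (ξplus i) + d * e := by
    calc ∑ i, G (ξplus i) ≤ ∑ i, (F (ξplus i) + e) :=
          Finset.sum_le_sum fun i _ ↦ by linarith [(abs_le.mp (hclose _ ((hplus i).inBox hξ))).2]
      _ = _ := by simp [Finset.sum_add_distrib]
  have hd' : (d : ℝ) ≠ 0 := Nat.cast_ne_zero.mpr hd.ne'
  calc 1 / (d : ℝ) * ∑ i, G (ξplus i) - Gstar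
      ≤ 1 / d * (d * F ξ - σ / L * (F ξ - Fstar) + d * e) - Fstar := by
        rw [hsame]; gcongr; linarith
    _ = (1 - σ / (d * L)) * (F ξ - Fstar) + e := by field_simp; ring

/-- one-step recursion for time-varying tracking: if `F` (previous objective)
satisfies the quadratic upper bound and prox-PL with attained optimum `F*`, `G` (current
objective) attains the same optimum `G* = F*`, and `sup_Y |G − F| ≤ e`, then one uniformly
random coordinate prox-step of `F` gives
`(1/d) Σ_i G(ξ^{+,i}) − G* ≤ (1 − σ/(dL))(F(ξ) − F*) + e`. -/
theorem stmt7 {d : ℕ} (hd : 0 < d) (l u : Fin d → ℝ) (hlu : ∀ i, l i ≤ u i)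
    (F G : (Fin d → ℝ) → ℝ) (hF : Differentiable ℝ F) (hG : Differentiable ℝ G)
    (L σ Fstar Gstar e : ℝ) (hL : 0 < L) (hσ : 0 < σ) (he : 0 ≤ e)
    (hquad : CoordQuadUB F L l u)
    (hFstar : Fstar = sInf {v : ℝ | ∃ ξ, InBox l u ξ ∧ v = F ξ})
    (hFatt : ∃ ξs, InBox l u ξs ∧ F ξs = Fstar)
    (hPL : ProxPL F L l u σ Fstar)
    (hGstar : Gstar = sInf {v : ℝ | ∃ ξ, InBox l u ξ ∧ v = G ξ})
    (hGatt : ∃ ξs, InBox l u ξs ∧ G ξs = Gstar)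
    (hsame : Gstar = Fstar)
    (hclose : ∀ ξ, InBox l u ξ → |G ξ - F ξ| ≤ e)
    (ξ : Fin d → ℝ) (hξ : InBox l u ξ)
    (ξplus : Fin d → (Fin d → ℝ))
    (hplus : ∀ i, IsProxStep F L l u ξ i (ξplus i)) :
    (1 / (d : ℝ)) * ∑ i, G (ξplus i) - Gstar ≤ (1 - σ / (d * L)) * (F ξ - Fstar) + e :=
  stmt7_general hd l u F G L σ Fstar Gstar e hL hquad hPL hsame hclose ξ hξ ξplus hplus
end
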